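/- Radon transform intertwines directional derivatives: Let f : ℝ^p → ℝ be continuously differentiable with compact support. Then for every unit vector θ = (θ₁, …, θ_p) ∈ ℝ^p, every orthonormal basis {θ, e₁, …, e_{p−1}} of ℝ^p extending θ, every coordinate index j ∈ {1, …, p} and every u ∈ ℝ, the function u ↦ R(f)(θ, u) is differentiable and R(∂f/∂z_j)(θ, u) = θ_j · (∂/∂u) R(f)(θ, u). -/

import Mathlib

/-!
Parametrise `ℝ^p` by `Φ (x, s) = x • θ + ∑ k, s k • e k`, an isomorphism `ℝ × ℝ^(p-1) ≃ ℝ^p`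
since `(θ, e)` is a basis. Then `R(f)(θ, ·)` is the fibre integral `x ↦ ∫ (f ∘ Φ) (x, s) ds` of the
compactly supported `C¹` function `f ∘ Φ`, so differentiating under the integral sign gives
`∂ᵤ R(f)(θ, u) = ∫ ∂ₓ(f ∘ Φ) (u, s) ds`. Orthonormality gives `single j 1 = Φ (θ j, t)` with
`t k = e k j`, hence `∂f/∂z_j ∘ Φ = θ j • ∂ₓ(f ∘ Φ) + ∂_t (f ∘ Φ)`, and the integral over `s` of the
second term vanishes, being the derivative of the compactly supported function `(f ∘ Φ) (u, ·)`.
-/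

open MeasureTheory

/-- The Radon transform of `f : ℝ^p → ℝ` along the direction `θ`, using the orthonormal
family `e` completing `θ` to a basis. -/
noncomputable def radon (p : ℕ) (f : EuclideanSpace ℝ (Fin p) → ℝ)
    (θ : EuclideanSpace ℝ (Fin p)) (e : Fin (p - 1) → EuclideanSpace ℝ (Fin p)) (u : ℝ) : ℝ :=
  ∫ s : EuclideanSpace ℝ (Fin (p - 1)), f (u • θ + ∑ j, s j • e j)

open Set Topology
open scoped RealInnerProductSpace

lemma HasCompactSupport.comp_prodMk {X Y β : Type*} [TopologicalSpace X] [TopologicalSpace Y]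
    [R1Space Y] [Zero β] {G : X × Y → β} (hG : HasCompactSupport G) (x : X) :
    HasCompactSupport fun y => G (x, y) :=
  .intro (hG.image continuous_snd) fun _ hy =>
    image_eq_zero_of_notMem_tsupport fun h => hy ⟨_, h, rfl⟩

theorem integral_fderiv_apply_eq_zero {E : Type*} [NormedAddCommGroup E] [NormedSpace ℝ E]
    [FiniteDimensional ℝ E] [MeasurableSpace E] [BorelSpace E] {μ : Measure E}
    [μ.IsAddHaarMeasure] {h : E → ℝ} (hh : ContDiff ℝ 1 h) (hc : HasCompactSupport h) (v : E) :
    ∫ x, fderiv ℝ h x v ∂μ = 0 := by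
  have hint : Integrable (fun x => fderiv ℝ h x v) μ :=
    ((hh.continuous_fderiv one_ne_zero).clm_apply continuous_const).integrable_of_hasCompactSupport
      ((hc.fderiv ℝ).comp_left (g := fun L : E →L[ℝ] ℝ => L v) rfl)
  simpa using integral_mul_fderiv_eq_neg_fderiv_mul_of_integrable (μ := μ) (f := fun _ => 1)
    (v := v) (by simp) (by simpa using hint)
    (by simpa using hh.continuous.integrable_of_hasCompactSupport hc)
    (fun x _ => differentiableAt_const 1) (fun x _ => hh.differentiable one_ne_zero x)

section FiberIntegral

variable {F : Type*} [NormedAddCommGroup F] [NormedSpace ℝ F] [MeasurableSpace F] [BorelSpace F]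
  {μ : Measure F} {G : ℝ × F → ℝ}

lemma integrable_fderiv_apply_prodMk [IsFiniteMeasureOnCompacts μ] (hG : ContDiff ℝ 1 G)
    (hc : HasCompactSupport G) (x : ℝ) (v : ℝ × F) :
    Integrable (fun s => fderiv ℝ G (x, s) v) μ :=
  (((hG.continuous_fderiv one_ne_zero).clm_apply continuous_const).comp
    (Continuous.prodMk_right x)).integrable_of_hasCompactSupport
    (((hc.fderiv ℝ).comp_left (g := fun L : ℝ × F →L[ℝ] ℝ => L v) rfl).comp_prodMk x)

theorem hasDerivAt_integral_of_hasCompactSupport [IsFiniteMeasureOnCompacts μ]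
    (hG : ContDiff ℝ 1 G) (hc : HasCompactSupport G) (x₀ : ℝ) :
    HasDerivAt (fun x => ∫ s, G (x, s) ∂μ) (∫ s, fderiv ℝ G (x₀, s) (1, 0) ∂μ) x₀ := by
  obtain ⟨C, hC⟩ := (hc.fderiv ℝ).exists_bound_of_continuous (hG.continuous_fderiv one_ne_zero)
  set K := Prod.snd '' tsupport G
  have hK : IsCompact K := hc.image continuous_snd
  have hcont (x : ℝ) : Continuous fun s => G (x, s) := hG.continuous.comp (.prodMk_right x)
  have hderiv (x : ℝ) (s : F) :
      HasDerivAt (fun y => G (y, s)) (fderiv ℝ G (x, s) (1, 0)) x := by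
    exact ((hG.differentiable one_ne_zero (x, s)).hasFDerivAt.comp x
      (hasFDerivAt_prodMk_left x s)).hasDerivAt
  have hbound (x : ℝ) (s : F) : ‖fderiv ℝ G (x, s) (1, 0)‖ ≤ K.indicator (fun _ => C) s := by
    by_cases hs : s ∈ K
    · rw [indicator_of_mem hs]
      calc ‖fderiv ℝ G (x, s) (1, 0)‖ ≤ ‖fderiv ℝ G (x, s)‖ * ‖((1 : ℝ), (0 : F))‖ :=
            (fderiv ℝ G (x, s)).le_opNorm _
        _ ≤ C := by simpa using hC (x, s)
    · have hzero : fderiv ℝ G (x, s) = 0 := by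
        by_contra h
        exact hs ⟨(x, s), support_fderiv_subset ℝ h, rfl⟩
      simp [hzero, indicator_of_notMem hs]
  exact (hasDerivAt_integral_of_dominated_loc_of_deriv_le (s := univ) Filter.univ_mem
    (.of_forall fun x => (hcont x).aestronglyMeasurable)
    ((hcont x₀).integrable_of_hasCompactSupport (hc.comp_prodMk x₀))
    (integrable_fderiv_apply_prodMk hG hc x₀ (1, 0)).aestronglyMeasurable
    (.of_forall fun s x _ => hbound x s)
    ((integrable_indicator_iff hK.measurableSet).2 (integrableOn_const hK.measure_lt_top.ne))
    (.of_forall fun s x _ => hderiv x s)).2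

theorem integral_fderiv_prodMk_apply [FiniteDimensional ℝ F] [μ.IsAddHaarMeasure]
    (hG : ContDiff ℝ 1 G) (hc : HasCompactSupport G) (x a : ℝ) (t : F) :
    ∫ s, fderiv ℝ G (x, s) (a, t) ∂μ = a * ∫ s, fderiv ℝ G (x, s) (1, 0) ∂μ := by
  have hsplit (s : F) :
      fderiv ℝ G (x, s) (a, t) = a * fderiv ℝ G (x, s) (1, 0) + fderiv ℝ G (x, s) (0, t) := by
    rw [← smul_eq_mul, ← map_smul, ← map_add]
    simp
  have hfiber : ∫ s, fderiv ℝ G (x, s) (0, t) ∂μ = 0 := by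
    have hfd (s : F) : fderiv ℝ (fun s => G (x, s)) s =
        (fderiv ℝ G (x, s)).comp (ContinuousLinearMap.inr ℝ ℝ F) :=
      ((hG.differentiable one_ne_zero (x, s)).hasFDerivAt.comp s
        (hasFDerivAt_prodMk_right x s)).fderiv
    have hfiber_smooth : ContDiff ℝ 1 fun s => G (x, s) := hG.comp (contDiff_prodMk_right x)
    simpa [hfd] using integral_fderiv_apply_eq_zero (μ := μ) hfiber_smooth (hc.comp_prodMk x) t
  simp_rw [hsplit]
  rw [integral_add ((integrable_fderiv_apply_prodMk hG hc x _).const_mul a)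
    (integrable_fderiv_apply_prodMk hG hc x _), integral_const_mul, hfiber, add_zero]

end FiberIntegral

section FrameMap

variable {ι E : Type*} [Fintype ι] [NormedAddCommGroup E]

noncomputable def frameMap [NormedSpace ℝ E] (θ : E) (e : ι → E) :
    ℝ × EuclideanSpace ℝ ι →L[ℝ] E :=
  (ContinuousLinearMap.fst ℝ ℝ _).smulRight θ +
    ∑ k, ((EuclideanSpace.proj k).comp (ContinuousLinearMap.snd ℝ ℝ _)).smulRight (e k)

@[simp]
lemma frameMap_apply [NormedSpace ℝ E] (θ : E) (e : ι → E) (x : ℝ) (s : EuclideanSpace ℝ ι) :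
    frameMap θ e (x, s) = x • θ + ∑ k, s k • e k := by
  simp [frameMap]

lemma isClosedEmbedding_frameMap [NormedSpace ℝ E] {θ : E} {e : ι → E}
    (h : LinearIndependent ℝ (Sum.elim (fun _ : Unit => θ) e)) :
    IsClosedEmbedding (frameMap θ e) := by
  refine LinearMap.isClosedEmbedding_of_injective (f := (frameMap θ e).toLinearMap) ?_
  refine LinearMap.ker_eq_bot'.2 fun ⟨x, s⟩ hxs => ?_
  have hcoeff := Fintype.linearIndependent_iff.1 h (Sum.elim (fun _ => x) s)
    (by simpa [Fintype.sum_sum_type] using hxs)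
  ext1
  · exact hcoeff (.inl ())
  · ext k
    exact hcoeff (.inr k)

lemma frameMap_inner_eq_self [InnerProductSpace ℝ E] {θ : E} {e : ι → E}
    (horth : Orthonormal ℝ (Sum.elim (fun _ : Unit => θ) e))
    (hspan : Submodule.span ℝ (Set.range (Sum.elim (fun _ : Unit => θ) e)) = ⊤) (w : E) :
    frameMap θ e (⟪θ, w⟫, WithLp.toLp 2 fun k => ⟪e k, w⟫) = w := by
  simpa [Fintype.sum_sum_type] using (OrthonormalBasis.mk horth hspan.ge).sum_repr' w

end FrameMap

lemma radon_eq_integral_frameMap (p : ℕ) (f : EuclideanSpace ℝ (Fin p) → ℝ)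
    (θ : EuclideanSpace ℝ (Fin p)) (e : Fin (p - 1) → EuclideanSpace ℝ (Fin p)) :
    radon p f θ e = fun u => ∫ s, f (frameMap θ e (u, s)) := by
  ext u
  simp [radon]

theorem radon_intertwines_derivatives_general (p : ℕ)
    (f : EuclideanSpace ℝ (Fin p) → ℝ)
    (hf : ContDiff ℝ 1 f) (hsupp : HasCompactSupport f)
    (θ : EuclideanSpace ℝ (Fin p))
    (e : Fin (p - 1) → EuclideanSpace ℝ (Fin p))
    (horth : Orthonormal ℝ (Sum.elim (fun _ : Unit => θ) e))
    (hspan : Submodule.span ℝ (Set.range (Sum.elim (fun _ : Unit => θ) e)) = ⊤)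
    (j : Fin p) (u : ℝ) :
    DifferentiableAt ℝ (radon p f θ e) u ∧
      radon p (fun z => fderiv ℝ f z (EuclideanSpace.single j 1)) θ e u =
        θ j * deriv (radon p f θ e) u := by
  set Φ := frameMap θ e
  have hG : ContDiff ℝ 1 (f ∘ Φ) := hf.comp Φ.contDiff
  have hGc : HasCompactSupport (f ∘ Φ) :=
    hsupp.comp_isClosedEmbedding (isClosedEmbedding_frameMap horth.linearIndependent)
  have hfderiv (z v : ℝ × EuclideanSpace ℝ (Fin (p - 1))) :
      fderiv ℝ (f ∘ Φ) z v = fderiv ℝ f (Φ z) (Φ v) := by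
    rw [fderiv_comp z (hf.differentiable one_ne_zero _) Φ.differentiableAt, Φ.fderiv]
    rfl
  have hderiv : HasDerivAt (radon p f θ e) (∫ s, fderiv ℝ (f ∘ Φ) (u, s) (1, 0)) u := by
    rw [radon_eq_integral_frameMap]
    exact hasDerivAt_integral_of_hasCompactSupport hG hGc u
  refine ⟨hderiv.differentiableAt, ?_⟩
  set w : EuclideanSpace ℝ (Fin p) := EuclideanSpace.single j 1
  calc radon p (fun z => fderiv ℝ f z w) θ e u
      = ∫ s, fderiv ℝ (f ∘ Φ) (u, s) (⟪θ, w⟫, WithLp.toLp 2 fun k => ⟪e k, w⟫) := by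
        simp only [radon_eq_integral_frameMap, hfderiv, Φ, frameMap_inner_eq_self horth hspan]
    _ = ⟪θ, w⟫ * ∫ s, fderiv ℝ (f ∘ Φ) (u, s) (1, 0) := integral_fderiv_prodMk_apply hG hGc _ _ _
    _ = θ j * deriv (radon p f θ e) u := by
        rw [hderiv.deriv, EuclideanSpace.inner_single_right]
        simp

/-- The Radon transform intertwines directional derivatives: for `f` continuously
differentiable with compact support, the slice `u ↦ R(f)(θ, u)` is differentiable and
`R(∂f/∂z_j)(θ, u) = θ_j ⬝ (∂/∂u) R(f)(θ, u)`. -/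
theorem radon_intertwines_derivatives (p : ℕ) (hp : 1 ≤ p)
    (f : EuclideanSpace ℝ (Fin p) → ℝ)
    (hf : ContDiff ℝ 1 f) (hsupp : HasCompactSupport f)
    (θ : EuclideanSpace ℝ (Fin p)) (hθ : ‖θ‖ = 1)
    (e : Fin (p - 1) → EuclideanSpace ℝ (Fin p))
    (horth : Orthonormal ℝ (Sum.elim (fun _ : Unit => θ) e))
    (hspan : Submodule.span ℝ (Set.range (Sum.elim (fun _ : Unit => θ) e)) = ⊤)
    (j : Fin p) (u : ℝ) :
    DifferentiableAt ℝ (radon p f θ e) u ∧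
      radon p (fun z => fderiv ℝ f z (EuclideanSpace.single j 1)) θ e u =
        θ j * deriv (radon p f θ e) u :=
  radon_intertwines_derivatives_general p f hf hsupp θ e horth hspan j u
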